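/- arXiv:1008.1469 — 8 statements merged into one kernel-verified Lean document; each statement's English description precedes it below -/
import Mathlib

section
/- For all nonnegative integers m and n, the sum over k from 0 to floor(n/2) of (1/(2k+1)) * C(3k, k) * C(n+k, 3k) equals (1/(n+1)) * C(2n, n). -/
open Finset

/-- WZ certificate function. -/
noncomputable def Gq (n k : ℕ) : ℚ :=
  -6 * (k : ℚ) ^ 2 * ((3 * k).choose k) * ((n + 1 + k).choose (3 * k)) /
    (((n : ℚ) + 1) * ((n : ℚ) + (k : ℚ) + 1))

lemma key (n k : ℕ) :
    ((n : ℚ) + 2) * ((1 / (2 * (k : ℚ) + 1)) * ((3 * k).choose k) * ((n + 1 + k).choose (3 * k)))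
      - (4 * (n : ℚ) + 2) * ((1 / (2 * (k : ℚ) + 1)) * ((3 * k).choose k) * ((n + k).choose (3 * k)))
    = Gq n (k + 1) - Gq n k := by
  rcases le_or_gt (2 * k) n with h | h
  · -- main case : n = 2k + d
    obtain ⟨d, rfl⟩ : ∃ d, n = 2 * k + d := ⟨n - 2 * k, by omega⟩
    have i1 : 2 * k + d + 1 + k = 3 * k + d + 1 := by ring
    have i2 : 2 * k + d + k = 3 * k + d := by ring
    have i3 : 2 * k + d + 1 + (k + 1) = 3 * k + d + 2 := by ring
    have i4 : 3 * (k + 1) = 3 * k + 3 := by ring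
    simp only [Gq, i1, i2, i3, i4]
    -- natural number choose identities
    have n1 : (3 * k + d).choose (3 * k) * (3 * k + d + 1)
        = (3 * k + d + 1).choose (3 * k) * (d + 1) := by
      have := Nat.choose_mul_succ_eq (3 * k + d) (3 * k)
      rwa [show 3 * k + d + 1 - 3 * k = d + 1 from by omega] at this
    have s1 : (3 * k + d).choose (3 * k + 1) * (3 * k + 1) = (3 * k + d).choose (3 * k) * d := by
      have := Nat.choose_succ_right_eq (3 * k + d) (3 * k)
      rwa [show 3 * k + d - 3 * k = d from by omega] at this
    have s2 : (3 * k + d + 1) * (3 * k + d).choose (3 * k + 1)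
        = (3 * k + d + 1).choose (3 * k + 2) * (3 * k + 2) := by
      have := Nat.add_one_mul_choose_eq (3 * k + d) (3 * k + 1)
      simpa [Nat.succ_eq_add_one] using this
    have s3 : (3 * k + d + 2) * (3 * k + d + 1).choose (3 * k + 2)
        = (3 * k + d + 2).choose (3 * k + 3) * (3 * k + 3) := by
      have := Nat.add_one_mul_choose_eq (3 * k + d + 1) (3 * k + 2)
      simpa [Nat.succ_eq_add_one] using this
    have t1 : (3 * k).choose k * (3 * k + 1) = (3 * k + 1).choose k * (2 * k + 1) := by
      have := Nat.choose_mul_succ_eq (3 * k) k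
      rwa [show 3 * k + 1 - k = 2 * k + 1 from by omega] at this
    have t2 : (3 * k + 1).choose k * (3 * k + 2) = (3 * k + 2).choose k * (2 * k + 2) := by
      have := Nat.choose_mul_succ_eq (3 * k + 1) k
      rwa [show 3 * k + 1 + 1 - k = 2 * k + 2 from by omega] at this
    have t3 : (3 * k + 3) * (3 * k + 2).choose k = (3 * k + 3).choose (k + 1) * (k + 1) := by
      have := Nat.add_one_mul_choose_eq (3 * k + 2) k
      simpa [Nat.succ_eq_add_one] using this
    -- cast to ℚ
    have q1 : ((3 * k + d).choose (3 * k) : ℚ) * (3 * (k : ℚ) + d + 1)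
        = ((3 * k + d + 1).choose (3 * k) : ℚ) * ((d : ℚ) + 1) := by exact_mod_cast n1
    have qs1 : ((3 * k + d).choose (3 * k + 1) : ℚ) * (3 * (k : ℚ) + 1)
        = ((3 * k + d).choose (3 * k) : ℚ) * (d : ℚ) := by exact_mod_cast s1
    have qs2 : (3 * (k : ℚ) + d + 1) * ((3 * k + d).choose (3 * k + 1) : ℚ)
        = ((3 * k + d + 1).choose (3 * k + 2) : ℚ) * (3 * (k : ℚ) + 2) := by exact_mod_cast s2
    have qs3 : (3 * (k : ℚ) + d + 2) * ((3 * k + d + 1).choose (3 * k + 2) : ℚ)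
        = ((3 * k + d + 2).choose (3 * k + 3) : ℚ) * (3 * (k : ℚ) + 3) := by exact_mod_cast s3
    have qt1 : ((3 * k).choose k : ℚ) * (3 * (k : ℚ) + 1)
        = ((3 * k + 1).choose k : ℚ) * (2 * (k : ℚ) + 1) := by exact_mod_cast t1
    have qt2 : ((3 * k + 1).choose k : ℚ) * (3 * (k : ℚ) + 2)
        = ((3 * k + 2).choose k : ℚ) * (2 * (k : ℚ) + 2) := by exact_mod_cast t2
    have qt3 : (3 * (k : ℚ) + 3) * ((3 * k + 2).choose k : ℚ)
        = ((3 * k + 3).choose (k + 1) : ℚ) * ((k : ℚ) + 1) := by exact_mod_cast t3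
    have hd : (d : ℚ) + 1 ≠ 0 := by positivity
    have hk1 : 2 * (k : ℚ) + 1 ≠ 0 := by positivity
    have e1 : ((3 * k + d + 1).choose (3 * k) : ℚ)
        = ((3 * k + d).choose (3 * k) : ℚ) * (3 * (k : ℚ) + d + 1) / ((d : ℚ) + 1) := by
      rw [eq_div_iff hd]; linarith [q1]
    have e2 : ((3 * k + d + 2).choose (3 * k + 3) : ℚ)
        = ((3 * k + d).choose (3 * k) : ℚ) * (d : ℚ) * (3 * (k : ℚ) + d + 1) * (3 * (k : ℚ) + d + 2)
          / ((3 * (k : ℚ) + 1) * (3 * (k : ℚ) + 2) * (3 * (k : ℚ) + 3)) := by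
      rw [eq_div_iff (by positivity)]
      linear_combination ((3 * (k : ℚ) + d + 1) * (3 * (k : ℚ) + d + 2)) * qs1
        - ((3 * (k : ℚ) + 1) * (3 * (k : ℚ) + d + 2)) * qs2
        - ((3 * (k : ℚ) + 1) * (3 * (k : ℚ) + 2)) * qs3
    have e3 : ((3 * k + 3).choose (k + 1) : ℚ)
        = ((3 * k).choose k : ℚ) * ((3 * (k : ℚ) + 1) * (3 * (k : ℚ) + 2) * (3 * (k : ℚ) + 3))
          / (((k : ℚ) + 1) * (2 * (k : ℚ) + 1) * (2 * (k : ℚ) + 2)) := by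
      rw [eq_div_iff (by positivity)]
      linear_combination (-(3 * (k : ℚ) + 2) * (3 * (k : ℚ) + 3)) * qt1
        - ((2 * (k : ℚ) + 1) * (3 * (k : ℚ) + 3)) * qt2
        - ((2 * (k : ℚ) + 1) * (2 * (k : ℚ) + 2)) * qt3
    push_cast
    rw [e1, e2, e3]
    have h1 : ((k : ℚ) + 1) ≠ 0 := by positivity
    have h2 : (2 * (k : ℚ) + (d : ℚ) + 1) ≠ 0 := by positivity
    have h3 : (2 * (k : ℚ) + (d : ℚ) + (k : ℚ) + 1) ≠ 0 := by positivity
    have h4 : (2 * (k : ℚ) + (d : ℚ) + ((k : ℚ) + 1) + 1) ≠ 0 := by positivity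
    field_simp
    ring
  · rcases eq_or_lt_of_le (Nat.succ_le_of_lt h) with h2 | h2
    · -- boundary case : n + 1 = 2k
      obtain ⟨j, rfl⟩ : ∃ j, k = j + 1 := ⟨k - 1, by omega⟩
      obtain rfl : n = 2 * j + 1 := by omega
      have i1 : 2 * j + 1 + 1 + (j + 1) = 3 * j + 3 := by ring
      have i2 : 2 * j + 1 + (j + 1) = 3 * j + 2 := by ring
      have i3 : 2 * j + 1 + 1 + (j + 1 + 1) = 3 * j + 4 := by ring
      have i4 : 3 * (j + 1) = 3 * j + 3 := by ring
      have i5 : 3 * (j + 1 + 1) = 3 * j + 6 := by ring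
      simp only [Gq, i1, i2, i3, i4, i5]
      rw [Nat.choose_self, Nat.choose_eq_zero_of_lt (by omega : 3 * j + 2 < 3 * j + 3),
        Nat.choose_eq_zero_of_lt (by omega : 3 * j + 4 < 3 * j + 6)]
      push_cast
      have h1 : 2 * ((j : ℚ) + 1) + 1 ≠ 0 := by positivity
      have h2 : ((2 * (j : ℚ) + 1) + 1) ≠ 0 := by positivity
      have h3 : ((2 * (j : ℚ) + 1) + ((j : ℚ) + 1) + 1) ≠ 0 := by positivity
      field_simp
      ring
    · -- all terms vanish
      have c1 : (n + k).choose (3 * k) = 0 := Nat.choose_eq_zero_of_lt (by omega)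
      have c2 : (n + 1 + k).choose (3 * k) = 0 := Nat.choose_eq_zero_of_lt (by omega)
      have c3 : (n + 1 + (k + 1)).choose (3 * (k + 1)) = 0 := Nat.choose_eq_zero_of_lt (by omega)
      simp [Gq, c1, c2, c3]

lemma sun_aux (n : ℕ) :
    ∑ k ∈ range (n + 1),
      (1 / (2 * (k : ℚ) + 1)) * ((3 * k).choose k) * ((n + k).choose (3 * k)) =
    (1 / ((n : ℚ) + 1)) * ((2 * n).choose n) := by
  induction n with
  | zero => simp
  | succ n IH =>
    have htel : ∑ k ∈ range (n + 2), (Gq n (k + 1) - Gq n k) = Gq n (n + 2) - Gq n 0 :=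
      Finset.sum_range_sub _ _
    have hG0 : Gq n 0 = 0 := by simp [Gq]
    have hGtop : Gq n (n + 2) = 0 := by
      have : (n + 1 + (n + 2)).choose (3 * (n + 2)) = 0 := Nat.choose_eq_zero_of_lt (by omega)
      simp [Gq, this]
    have hsum : ∑ k ∈ range (n + 1 + 1),
        (((n : ℚ) + 2) * ((1 / (2 * (k : ℚ) + 1)) * ((3 * k).choose k) * ((n + 1 + k).choose (3 * k)))
          - (4 * (n : ℚ) + 2) * ((1 / (2 * (k : ℚ) + 1)) * ((3 * k).choose k) * ((n + k).choose (3 * k))))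
        = 0 := by
      rw [Finset.sum_congr rfl fun k _ => key n k, htel, hG0, hGtop, sub_zero]
    rw [Finset.sum_sub_distrib, ← Finset.mul_sum, ← Finset.mul_sum, sub_eq_zero] at hsum
    have hlast : ∑ k ∈ range (n + 2),
        (1 / (2 * (k : ℚ) + 1)) * ((3 * k).choose k) * ((n + k).choose (3 * k))
        = ∑ k ∈ range (n + 1),
        (1 / (2 * (k : ℚ) + 1)) * ((3 * k).choose k) * ((n + k).choose (3 * k)) := by
      rw [Finset.sum_range_succ]
      have : (n + (n + 1)).choose (3 * (n + 1)) = 0 := Nat.choose_eq_zero_of_lt (by omega)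
      simp [this]
    rw [hlast, IH] at hsum
    -- hsum : (n+2) * S(n+1) = (4n+2) * (1/(n+1) * C(2n,n))
    have u1 : (2 * n).choose n * (2 * n + 1) = (2 * n + 1).choose n * (n + 1) := by
      have := Nat.choose_mul_succ_eq (2 * n) n
      rwa [show 2 * n + 1 - n = n + 1 from by omega] at this
    have u2 : (2 * n + 2) * (2 * n + 1).choose n = (2 * n + 2).choose (n + 1) * (n + 1) := by
      have := Nat.add_one_mul_choose_eq (2 * n + 1) n
      simpa [Nat.succ_eq_add_one] using this
    have qu1 : ((2 * n).choose n : ℚ) * (2 * (n : ℚ) + 1)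
        = ((2 * n + 1).choose n : ℚ) * ((n : ℚ) + 1) := by exact_mod_cast u1
    have qu2 : (2 * (n : ℚ) + 2) * ((2 * n + 1).choose n : ℚ)
        = ((2 * n + 2).choose (n + 1) : ℚ) * ((n : ℚ) + 1) := by exact_mod_cast u2
    have i6 : 2 * (n + 1) = 2 * n + 2 := by ring
    rw [i6]
    have hn1 : (n : ℚ) + 1 ≠ 0 := by positivity
    have hn2' : (n : ℚ) + 1 + 1 ≠ 0 := by positivity
    have hsum2 : ((n : ℚ) + 2) * (∑ k ∈ range (n + 1 + 1),
        (1 / (2 * (k : ℚ) + 1)) * ((3 * k).choose k) * ((n + 1 + k).choose (3 * k))) * ((n : ℚ) + 1)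
        = (4 * (n : ℚ) + 2) * ((2 * n).choose n : ℚ) := by
      rw [hsum]; field_simp
    push_cast
    rw [one_div_mul_eq_div, eq_div_iff hn2']
    have hfin : (∑ k ∈ range (n + 1 + 1),
        (1 / (2 * (k : ℚ) + 1)) * ((3 * k).choose k) * ((n + 1 + k).choose (3 * k)))
        * ((n : ℚ) + 1 + 1) * (((n : ℚ) + 1) * ((n : ℚ) + 1))
        = ((2 * n + 2).choose (n + 1) : ℚ) * (((n : ℚ) + 1) * ((n : ℚ) + 1)) := by
      linear_combination ((n : ℚ) + 1) * hsum2 + 2 * ((n : ℚ) + 1) * qu1 + ((n : ℚ) + 1) * qu2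
    have := mul_right_cancel₀ (show ((n : ℚ) + 1) * ((n : ℚ) + 1) ≠ 0 by positivity) hfin
    linear_combination this

theorem sun_identity_1 (m n : ℕ) :
    ∑ k ∈ range (n / 2 + 1),
      (1 / (2 * (k : ℚ) + 1)) * ((3 * k).choose k) * ((n + k).choose (3 * k)) =
    (1 / ((n : ℚ) + 1)) * ((2 * n).choose n) := by
  rw [← sun_aux n]
  apply Finset.sum_subset
  · intro x hx
    simp only [Finset.mem_range] at *
    omega
  · intro x _ hx
    simp only [Finset.mem_range, not_lt] at hx
    have : (n + x).choose (3 * x) = 0 := Nat.choose_eq_zero_of_lt (by omega)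
    simp [this]
end

section
/- For all positive integers n, the sum over k from 0 to floor((n-1)/2) of (1/(2k+1)) * C(3k+1, k+1) * C(n+k, 3k+1) equals (1/(n+1)) * C(2n, n). -/
/-!
Zeilberger's algorithm finds a rational certificate `G = sunCertificate` for the summand
`f = sunSummand` with `(n + 2) f (n + 1) k - (4 n + 2) f n k = G n (k + 1) - G n k`.
Summing over `k` telescopes to `(n + 2) S (n + 1) = (4 n + 2) S n`, the recurrence of the Catalan
numbers `C(2n, n) / (n + 1)`, and `S 1 = 1`. The relation itself is a rational-function identity
once the shifted binomials are expressed through one of them; the shift relations used for this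
hold for all natural arguments (both sides vanish off the support), so no case analysis is needed.
-/

open Finset

section ChooseShift

variable {R : Type*} [CommRing R]

theorem Nat.cast_choose_mul_succ_eq (m j : ℕ) :
    (m.choose j : R) * (m + 1) = (m + 1).choose j * (m + 1 - j) := by
  rcases le_or_gt j (m + 1) with h | h
  · have h' := congrArg (Nat.cast : ℕ → R) (Nat.choose_mul_succ_eq m j)
    push_cast [Nat.cast_sub h] at h'
    exact h'
  · simp [Nat.choose_eq_zero_of_lt h, Nat.choose_eq_zero_of_lt (Nat.lt_of_succ_lt h)]

theorem Nat.cast_choose_succ_right_eq (m j : ℕ) :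
    (m.choose (j + 1) : R) * (j + 1) = m.choose j * (m - j) := by
  rcases le_or_gt j m with h | h
  · have h' := congrArg (Nat.cast : ℕ → R) (Nat.choose_succ_right_eq m j)
    push_cast [Nat.cast_sub h] at h'
    exact h'
  · simp [Nat.choose_eq_zero_of_lt h, Nat.choose_eq_zero_of_lt (Nat.lt_succ_of_lt h)]

theorem Nat.cast_succ_mul_choose_eq (m j : ℕ) :
    ((m : R) + 1) * m.choose j = (m + 1).choose (j + 1) * (j + 1) := by
  exact_mod_cast congrArg (Nat.cast : ℕ → R) (Nat.add_one_mul_choose_eq m j)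

theorem Nat.cast_choose_add_three_succ_mul (m j : ℕ) :
    ((m + 3).choose (j + 1) : R) * ((j + 1) * (m - j + 1) * (m - j + 2)) =
      m.choose j * ((m + 1) * (m + 2) * (m + 3)) := by
  have h₁ := Nat.cast_choose_mul_succ_eq (R := R) m j
  have h₂ := Nat.cast_choose_mul_succ_eq (R := R) (m + 1) j
  have h₃ := Nat.cast_succ_mul_choose_eq (R := R) (m + 2) j
  push_cast at h₁ h₂ h₃
  linear_combination (-(m + 2) * (m + 3) : R) * h₁ - ((m + 1 - j) * (m + 3) : R) * h₂
    - ((m + 2 - j) * (m + 1 - j) : R) * h₃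

theorem Nat.cast_choose_succ_add_three_mul (m j : ℕ) :
    ((m + 1).choose (j + 3) : R) * ((j + 1) * (j + 2) * (j + 3)) =
      m.choose j * ((m - j) * (m - j - 1) * (m + 1)) := by
  have h₁ := Nat.cast_choose_succ_right_eq (R := R) m j
  have h₂ := Nat.cast_choose_succ_right_eq (R := R) m (j + 1)
  have h₃ := Nat.cast_succ_mul_choose_eq (R := R) m (j + 2)
  push_cast at h₁ h₂ h₃
  linear_combination ((m + 1) * (m - j - 1) : R) * h₁ + ((m + 1) * (j + 1) : R) * h₂
    - ((j + 1) * (j + 2) : R) * h₃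

end ChooseShift

def sunSummand (n k : ℕ) : ℚ :=
  (3 * k + 1).choose (k + 1) * (n + k).choose (3 * k + 1) / (2 * k + 1)

def sunCertificate (n k : ℕ) : ℚ :=
  -(2 * k * (k + 1) * (3 * n + 2)) * (3 * k + 1).choose (k + 1) *
    (n + k + 1).choose (3 * k + 1) / (n * (n + 1) * (n + k + 1))

theorem sunSummand_eq_zero {n k : ℕ} (h : n < 2 * k + 1) : sunSummand n k = 0 := by
  simp [sunSummand, Nat.choose_eq_zero_of_lt (by omega : n + k < 3 * k + 1)]

theorem sunCertificate_zero_right (n : ℕ) : sunCertificate n 0 = 0 := by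
  simp [sunCertificate]

theorem sunCertificate_eq_zero {n k : ℕ} (h : n < 2 * k) : sunCertificate n k = 0 := by
  simp [sunCertificate, Nat.choose_eq_zero_of_lt (by omega : n + k + 1 < 3 * k + 1)]

theorem sunSummand_zeilberger {n : ℕ} (hn : n ≠ 0) (k : ℕ) :
    (n + 2) * sunSummand (n + 1) k - (4 * n + 2) * sunSummand n k =
      sunCertificate n (k + 1) - sunCertificate n k := by
  have hX := Nat.cast_choose_mul_succ_eq (R := ℚ) (n + k) (3 * k + 1)
  have hZ := Nat.cast_choose_succ_add_three_mul (R := ℚ) (n + k + 1) (3 * k + 1)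
  have ha := Nat.cast_choose_add_three_succ_mul (R := ℚ) (3 * k + 1) (k + 1)
  simp only [sunSummand, sunCertificate, add_right_comm n 1 k,
    show n + (k + 1) + 1 = n + k + 1 + 1 by ring, show 3 * (k + 1) + 1 = 3 * k + 1 + 3 by ring]
  push_cast at hX hZ ha ⊢
  generalize ((3 * k + 1).choose (k + 1) : ℚ) = a at *
  generalize ((3 * k + 1 + 3).choose (k + 1 + 1) : ℚ) = a' at *
  generalize ((n + k).choose (3 * k + 1) : ℚ) = X at *
  generalize ((n + k + 1).choose (3 * k + 1) : ℚ) = Y at *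
  generalize ((n + k + 1 + 1).choose (3 * k + 1 + 3) : ℚ) = Z at *
  have hn' : (n : ℚ) ≠ 0 := by exact_mod_cast hn
  have hX' : X = Y * (n - 2 * k) / (n + k + 1) := by
    rw [eq_div_iff (by positivity)]; linear_combination hX
  have hZ' : Z = Y * ((n - 2 * k) * (n - 2 * k - 1) * (n + k + 2)) /
      ((3 * k + 2) * (3 * k + 3) * (3 * k + 4)) := by
    rw [eq_div_iff (by positivity)]; linear_combination hZ
  have ha' : a' = a * ((3 * k + 2) * (3 * k + 3) * (3 * k + 4)) /
      ((k + 2) * (2 * k + 1) * (2 * k + 2)) := by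
    rw [eq_div_iff (by positivity)]; linear_combination ha
  rw [hX', hZ', ha']
  field_simp
  ring

theorem sum_range_sunSummand_of_le {n K L : ℕ} (hK : n ≤ 2 * K) (hKL : K ≤ L) :
    ∑ k ∈ range L, sunSummand n k = ∑ k ∈ range K, sunSummand n k := by
  refine (sum_subset (range_subset_range.2 hKL) fun k _ hk => sunSummand_eq_zero ?_).symm
  simp only [mem_range, not_lt] at hk
  omega

def sunSum (n : ℕ) : ℚ := ∑ k ∈ range (n + 1), sunSummand n k

theorem sunSum_recurrence {n : ℕ} (hn : n ≠ 0) :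
    (n + 2) * sunSum (n + 1) = (4 * n + 2) * sunSum n := by
  have htelescope : ∑ k ∈ range (n + 1),
      ((n + 2) * sunSummand (n + 1) k - (4 * n + 2) * sunSummand n k) = 0 := by
    rw [sum_congr rfl fun k _ => sunSummand_zeilberger hn k, sum_range_sub,
      sunCertificate_eq_zero (by omega), sunCertificate_zero_right, sub_zero]
  rw [sum_sub_distrib, ← mul_sum, ← mul_sum, sub_eq_zero] at htelescope
  rw [sunSum, sum_range_sunSummand_of_le (K := n + 1) (by omega) (by omega), htelescope, sunSum]

theorem succ_mul_sunSum {n : ℕ} (hn : n ≠ 0) : (n + 1) * sunSum n = (2 * n).choose n := by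
  induction n with
  | zero => exact absurd rfl hn
  | succ n ih =>
    rcases eq_or_ne n 0 with rfl | hn₀
    · norm_num [sunSum, sunSummand, sum_range_succ, Nat.choose]
    have hcentral : ((n : ℚ) + 1) * (2 * (n + 1)).choose (n + 1) =
        2 * (2 * n + 1) * (2 * n).choose n := by
      exact_mod_cast Nat.succ_mul_centralBinom_succ n
    refine mul_left_cancel₀ (n.cast_add_one_ne_zero (R := ℚ)) ?_
    push_cast
    linear_combination (n + 1 : ℚ) * sunSum_recurrence hn₀ + (4 * n + 2 : ℚ) * ih hn₀ - hcentral

theorem sun_identity_2 (n : ℕ) (hn : 0 < n) :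
    ∑ k ∈ range ((n - 1) / 2 + 1),
      (1 / (2 * (k : ℚ) + 1)) * ((3 * k + 1).choose (k + 1)) * ((n + k).choose (3 * k + 1)) =
    (1 / ((n : ℚ) + 1)) * ((2 * n).choose n) := by
  have hsum : ∑ k ∈ range ((n - 1) / 2 + 1),
      (1 / (2 * (k : ℚ) + 1)) * ((3 * k + 1).choose (k + 1)) * ((n + k).choose (3 * k + 1)) =
      sunSum n := by
    rw [sunSum, sum_range_sunSummand_of_le (K := (n - 1) / 2 + 1) (by omega) (by omega)]
    exact sum_congr rfl fun k _ => by rw [sunSummand]; ring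
  rw [hsum, ← succ_mul_sunSum hn.ne']
  field_simp
end

section
/- For all nonnegative integers n and positive integers a, the sum over k from 0 to floor(n/2) of (1/(3k+a)) * C(3k+a, k) * C(n+a+k-1, n-2k) equals (1/(2n+a)) * C(2n+a, n). -/
/-!
Write `a = b + 1`. The `k`-th summand equals `(n + k + b)! / (k! (n - 2k)! (2k + b + 1)!)`, a
hypergeometric term in `n` and `k`, and the right-hand side is `(2n + b)! / (n! (n + b + 1)!)`.
Creative telescoping: the summands `F n k` satisfy
`(n + 1)(n + b + 2) F (n + 1) k - (2n + b + 1)(2n + b + 2) F n k = G n (k + 1) - G n k`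
for an explicit certificate `G`, so summing over `k` shows that both sides obey the same
first-order recurrence in `n`, and they agree at `n = 0`.
-/

open Finset
open scoped Nat

namespace SunIdentity

variable (b : ℕ)

/-- The `k`-th summand of the identity, with `a = b + 1` and `m = n - 2k`. -/
def term (k m : ℕ) : ℚ := (m + 3 * k + b)! / (k ! * m ! * (2 * k + b + 1)!)

theorem term_succ_right (k m : ℕ) :
    term b k (m + 1) = (m + 3 * k + b + 1) / (m + 1) * term b k m := by
  rw [term, term, show m + 1 + 3 * k + b = m + 3 * k + b + 1 by ring, Nat.factorial_succ,
    Nat.factorial_succ m]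
  push_cast
  field_simp

theorem term_succ_left (k m : ℕ) :
    term b k (m + 1) = (k + 1) * (2 * k + b + 2) * (2 * k + b + 3) /
      ((m + 1) * (m + 3 * k + b + 2) * (m + 3 * k + b + 3)) * term b (k + 1) m := by
  rw [term, term, show m + 3 * (k + 1) + b = m + 3 * k + b + 1 + 1 + 1 by ring,
    show m + 1 + 3 * k + b = m + 3 * k + b + 1 by ring,
    show 2 * (k + 1) + b + 1 = 2 * k + b + 1 + 1 + 1 by ring]
  simp only [Nat.factorial_succ]
  push_cast
  field_simp
  ring

/-- Zeilberger's certificate for `term`. The factor `↑(n - 2 * k)` (truncated subtraction) makes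
it vanish once `2 * k ≥ n`. -/
def cert (n : ℕ) : ℕ → ℚ
  | 0 => 0
  | k + 1 => -(3 * n + 2 * b + 3) / (n + b + 1) * (n + k + b + 1) * (n - 2 * k : ℕ) *
      term b k (n - 2 * k)

theorem cert_succ_eq_zero {n k : ℕ} (h : n ≤ 2 * k) : cert b n (k + 1) = 0 := by
  simp [cert, Nat.sub_eq_zero_of_le h]

theorem cert_step {n k : ℕ} (h : 2 * k ≤ n) :
    (n + 1 : ℚ) * (n + b + 2) * term b k (n + 1 - 2 * k) -
        (2 * n + b + 1) * (2 * n + b + 2) * term b k (n - 2 * k) =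
      cert b n (k + 1) - cert b n k := by
  obtain ⟨m, rfl⟩ := Nat.exists_eq_add_of_le h
  rw [show 2 * k + m + 1 - 2 * k = m + 1 by omega, term_succ_right]
  cases k with
  | zero =>
    simp only [cert, Nat.add_sub_cancel_left]
    push_cast
    field_simp
    ring
  | succ j =>
    simp only [cert, Nat.add_sub_cancel_left, show 2 * (j + 1) + m - 2 * j = m + 1 + 1 by omega]
    rw [term_succ_left b j (m + 1), term_succ_right b (j + 1) m]
    push_cast
    field_simp
    ring

theorem cert_step_last {n j : ℕ} (h : n = 2 * j + 1) :
    (n + 1 : ℚ) * (n + b + 2) * term b (j + 1) (n + 1 - 2 * (j + 1)) =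
      cert b n (j + 1 + 1) - cert b n (j + 1) := by
  subst h
  rw [cert_succ_eq_zero b (show 2 * j + 1 ≤ 2 * (j + 1) by omega)]
  simp only [cert, show 2 * j + 1 - 2 * j = 0 + 1 by omega,
    show 2 * j + 1 + 1 - 2 * (j + 1) = 0 by omega, term_succ_left b j 0]
  push_cast
  field_simp
  ring

theorem sum_range_cert_step {n N : ℕ} (hN : 2 * N ≤ n + 2) :
    ∑ k ∈ range N, ((n + 1 : ℚ) * (n + b + 2) * term b k (n + 1 - 2 * k) -
        (2 * n + b + 1) * (2 * n + b + 2) * term b k (n - 2 * k)) = cert b n N := by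
  rw [sum_congr rfl fun k hk => cert_step b (by rw [mem_range] at hk; omega), sum_range_sub]
  simp [cert]

def termSum (n : ℕ) : ℚ := ∑ k ∈ range (n / 2 + 1), term b k (n - 2 * k)

theorem termSum_succ (n : ℕ) :
    (n + 1 : ℚ) * (n + b + 2) * termSum b (n + 1) =
      (2 * n + b + 1) * (2 * n + b + 2) * termSum b n := by
  have hcert := sum_range_cert_step b (n := n) (N := n / 2 + 1) (by omega)
  rw [sum_sub_distrib, ← mul_sum, ← mul_sum] at hcert
  obtain ⟨j, rfl | rfl⟩ := Nat.even_or_odd' n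
  · rw [cert_succ_eq_zero b (by omega)] at hcert
    rw [termSum, termSum, show (2 * j + 1) / 2 = 2 * j / 2 by omega]
    linarith
  · rw [termSum, termSum, show (2 * j + 1 + 1) / 2 + 1 = (2 * j + 1) / 2 + 1 + 1 by omega,
      sum_range_succ, mul_add, show (2 * j + 1) / 2 = j by omega, cert_step_last b rfl,
      cert_succ_eq_zero b (by omega)]
    rw [show (2 * j + 1) / 2 = j by omega] at hcert
    linarith

def closedForm (n : ℕ) : ℚ := (2 * n + b)! / (n ! * (n + b + 1)!)

theorem closedForm_succ (n : ℕ) :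
    (n + 1 : ℚ) * (n + b + 2) * closedForm b (n + 1) =
      (2 * n + b + 1) * (2 * n + b + 2) * closedForm b n := by
  rw [closedForm, closedForm, show 2 * (n + 1) + b = 2 * n + b + 1 + 1 by ring,
    show n + 1 + b + 1 = n + b + 1 + 1 by ring]
  simp only [Nat.factorial_succ]
  push_cast
  field_simp
  ring

theorem termSum_eq_closedForm (n : ℕ) : termSum b n = closedForm b n := by
  induction n with
  | zero => simp [termSum, term, closedForm]
  | succ n ih =>
    refine mul_left_cancel₀ (by positivity : (n + 1 : ℚ) * (n + b + 2) ≠ 0) ?_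
    rw [termSum_succ, closedForm_succ, ih]

theorem one_div_mul_choose_mul_choose (k m : ℕ) :
    1 / (3 * k + b + 1 : ℚ) * (3 * k + b + 1).choose k * (m + 3 * k + b).choose m =
      term b k m := by
  rw [Nat.cast_choose ℚ (by omega : k ≤ 3 * k + b + 1),
    Nat.cast_choose ℚ (by omega : m ≤ m + 3 * k + b),
    show 3 * k + b + 1 - k = 2 * k + b + 1 by omega, show m + 3 * k + b - m = 3 * k + b by omega,
    Nat.factorial_succ (3 * k + b), term]
  push_cast
  field_simp

theorem one_div_mul_choose_eq_closedForm (n : ℕ) :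
    1 / (2 * n + b + 1 : ℚ) * (2 * n + b + 1).choose n = closedForm b n := by
  rw [Nat.cast_choose ℚ (by omega : n ≤ 2 * n + b + 1),
    show 2 * n + b + 1 - n = n + b + 1 by omega,
    Nat.factorial_succ (2 * n + b), closedForm]
  push_cast
  field_simp

end SunIdentity

theorem sun_identity_3 (n a : ℕ) (ha : 0 < a) :
    ∑ k ∈ range (n / 2 + 1),
      (1 / (3 * (k : ℚ) + a)) * ((3 * k + a).choose k) * ((n + a + k - 1).choose (n - 2 * k)) =
    (1 / (2 * (n : ℚ) + a)) * ((2 * n + a).choose n) := by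
  obtain ⟨b, rfl⟩ : ∃ b, a = b + 1 := ⟨a - 1, by omega⟩
  push_cast [← add_assoc]
  rw [SunIdentity.one_div_mul_choose_eq_closedForm, ← SunIdentity.termSum_eq_closedForm,
    SunIdentity.termSum]
  refine sum_congr rfl fun k hk => ?_
  rw [← SunIdentity.one_div_mul_choose_mul_choose,
    show n + b + 1 + k - 1 = n - 2 * k + 3 * k + b by rw [mem_range] at hk; omega]
end

section
/- For all nonnegative integers n, the sum over k from 0 to floor(n/4) of (1/(4k+1)) * C(5k, k) * C(n+k, 5k) equals the sum over k from 0 to floor(n/2) of ((-1)^k/(n+1)) * C(n+k, k) * C(2n-2k, n). -/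
/-!
Let `A` be the power series with `(1 - X) A = 1 + X⁴ A⁵`; both sides of the identity are the
coefficient of `Xⁿ` in `A`. The powers `F t = A ^ t` satisfy the linear recurrence
`F (t + 1) = F t + X F (t + 1) + X⁴ F (t + 5)` with `F 0 = 1`, which determines the family
coefficient by coefficient, so it suffices to exhibit two families obeying it:

* `∑ₖ R(t, k) X^{4k} (1 - X)^{-(5k + t)}` with the Raney numbers
  `R(t, k) = t/(5k+t) C(5k+t, k)`, for which the recurrence is Pascal's rule
  `R(t+1, k+1) = R(t, k+1) + R(t+5, k)`;
* the series with coefficients `t/(n+t) [Xⁿ] q^{-(n+t)}`, `q = (1 - X)(1 + X²)`, which is `A ^ t`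
  by Lagrange inversion since `A = 1 / q (X A)`. Its recurrence is checked directly: it is a linear
  combination of the coefficients of `q · q^{-(M+1)} = q^{-M}` and `q · (q^{-M})' = -M q' q^{-M}`.

At `t = 1` the two families give the two sides.
-/

open Finset PowerSeries

namespace SunIdentity

section

variable {R : Type*} [CommRing R]

theorem eq_zero_of_forall_X_pow_dvd {φ : R⟦X⟧} (h : ∀ N, X ^ N ∣ φ) : φ = 0 := by
  ext n
  simpa using X_pow_dvd_iff.mp (h (n + 1)) n n.lt_succ_self

theorem family_eq_of_recurrence (a b : ℕ) {F H : ℕ → R⟦X⟧} (h₀ : F 0 = H 0)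
    (hF : ∀ t, F (t + 1) = F t + X * F (t + 1) + X ^ (a + 1) * F (t + b))
    (hH : ∀ t, H (t + 1) = H t + X * H (t + 1) + X ^ (a + 1) * H (t + b)) : F = H := by
  suffices h : ∀ N t, X ^ N ∣ F t - H t from
    funext fun t => sub_eq_zero.mp (eq_zero_of_forall_X_pow_dvd fun N => h N t)
  intro N
  induction N with
  | zero => simp
  | succ N ihN =>
    intro t
    induction t with
    | zero => simp [h₀]
    | succ t iht =>
      have e : F (t + 1) - H (t + 1) = (F t - H t) + X * (F (t + 1) - H (t + 1)) +
          X ^ (a + 1) * (F (t + b) - H (t + b)) := by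
        linear_combination hF t - hH t
      rw [e]
      refine dvd_add (dvd_add iht ?_) ?_
      · rw [pow_succ']
        exact mul_dvd_mul_left X (ihN _)
      · rw [show N + 1 = 1 + N by ring, pow_add]
        exact mul_dvd_mul (pow_dvd_pow X (Nat.le_add_left 1 a)) (ihN _)

theorem coeff_mul_expand (p : ℕ) (hp : p ≠ 0) (f g : R⟦X⟧) (N : ℕ) :
    coeff N (f * expand p hp g) = ∑ j ∈ range (N / p + 1), coeff j g * coeff (N - p * j) f := by
  rw [mul_comm, coeff_mul,
    Nat.sum_antidiagonal_eq_sum_range_succ (fun i j => coeff i (expand p hp g) * coeff j f)]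
  simp only [coeff_expand, ite_mul, zero_mul]
  rw [← sum_filter]
  refine sum_nbij' (· / p) (p * ·) ?_ ?_ ?_ ?_ ?_
  · intro i hi
    simp only [mem_filter, mem_range] at hi ⊢
    exact Nat.lt_succ_of_le (Nat.div_le_div_right (Nat.lt_succ_iff.mp hi.1))
  · intro j hj
    simp only [mem_filter, mem_range] at hj ⊢
    have hjN : j * p ≤ N := (Nat.le_div_iff_mul_le (Nat.pos_of_ne_zero hp)).mp (by omega)
    exact ⟨by rw [mul_comm]; omega, dvd_mul_right p j⟩
  · intro i hi
    simp only [mem_filter] at hi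
    exact Nat.mul_div_cancel' hi.2
  · intro j _
    exact Nat.mul_div_cancel_left j (Nat.pos_of_ne_zero hp)
  · intro i hi
    simp only [mem_filter] at hi
    rw [Nat.mul_div_cancel' hi.2]

theorem mul_derivative_pow_of_mul_eq_one {f g : R⟦X⟧} (hfg : f * g = 1) (M : ℕ) :
    f * d⁄dX R (g ^ M) = -(M * g ^ M * d⁄dX R f) := by
  have hg : f * d⁄dX R g = -(g * d⁄dX R f) := by
    have := congrArg (d⁄dX R) hfg
    rw [Derivation.leibniz, Derivation.map_one_eq_zero, smul_eq_mul, smul_eq_mul] at this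
    linear_combination this
  rcases M with _ | M
  · simp
  · rw [derivative_pow, add_tsub_cancel_right]
    push_cast
    linear_combination ((M + 1 : R⟦X⟧) * g ^ M) * hg

/-- `coeff` extended by zero to negative indices, so that shifted coefficient identities need no
case split. -/
noncomputable def coeffInt (m : ℤ) : R⟦X⟧ →ₗ[R] R := if 0 ≤ m then coeff m.toNat else 0

@[simp]
theorem coeffInt_natCast (n : ℕ) (f : R⟦X⟧) : coeffInt n f = coeff n f := by
  simp [coeffInt]

theorem coeffInt_of_neg {m : ℤ} (hm : m < 0) (f : R⟦X⟧) : coeffInt m f = 0 := by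
  simp [coeffInt, not_le.mpr hm]

theorem coeffInt_X_pow_mul (f : R⟦X⟧) (k : ℕ) (m : ℤ) :
    coeffInt m (X ^ k * f) = coeffInt (m - k) f := by
  rcases lt_or_ge m 0 with hm | hm
  · rw [coeffInt_of_neg hm, coeffInt_of_neg (by omega)]
  lift m to ℕ using hm
  rw [coeffInt_natCast, coeff_X_pow_mul']
  split_ifs with hk
  · rw [← Nat.cast_sub hk, coeffInt_natCast]
  · rw [coeffInt_of_neg (by omega)]

theorem coeffInt_X_mul (f : R⟦X⟧) (m : ℤ) : coeffInt m (X * f) = coeffInt (m - 1) f := by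
  simpa using coeffInt_X_pow_mul f 1 m

theorem coeffInt_derivative (f : R⟦X⟧) (m : ℤ) :
    coeffInt m (d⁄dX R f) = (m + 1) • coeffInt (m + 1) f := by
  rcases lt_or_ge m 0 with hm | hm
  · rw [coeffInt_of_neg hm]
    rcases (show m + 1 < 0 ∨ m + 1 = 0 by omega) with h | h
    · rw [coeffInt_of_neg h, smul_zero]
    · rw [h, zero_smul]
  lift m to ℕ using hm
  rw [coeffInt_natCast, coeff_derivative, ← Nat.cast_add_one (R := ℤ), coeffInt_natCast,
    natCast_zsmul, nsmul_eq_mul, mul_comm]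
  push_cast
  ring

end

/-- The Raney numbers `r / (5k + r) * C(5k + r, k)` (cf. `raney_one`), in an integral form that
also gives `raney 0 k = if k = 0 then 1 else 0`. -/
def raney (r : ℕ) : ℕ → ℤ
  | 0 => 1
  | k + 1 => (5 * k + r + 4).choose (k + 1) - 4 * (5 * k + r + 4).choose k

@[simp]
theorem raney_zero (r : ℕ) : raney r 0 = 1 := rfl

theorem raney_succ_succ (r k : ℕ) :
    raney (r + 1) (k + 1) = raney r (k + 1) + raney (r + 5) k := by
  rcases k with _ | j
  · simp only [raney, mul_zero, zero_add, Nat.choose_one_right, Nat.choose_zero_right]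
    push_cast
    ring
  · have p₁ := Nat.choose_succ_succ' (5 * j + r + 9) (j + 1)
    have p₂ := Nat.choose_succ_succ' (5 * j + r + 9) j
    simp only [raney]
    rw [show 5 * (j + 1) + (r + 1) + 4 = 5 * j + r + 9 + 1 by ring, p₁, p₂,
      show 5 * (j + 1) + r + 4 = 5 * j + r + 9 by ring,
      show 5 * j + (r + 5) + 4 = 5 * j + r + 9 by ring]
    push_cast
    ring

theorem raney_zero_succ (k : ℕ) : raney 0 (k + 1) = 0 := by
  have h := Nat.choose_succ_right_eq (5 * k + 4) k
  rw [show 5 * k + 4 - k = 4 * (k + 1) by omega, ← mul_assoc, mul_comm _ 4] at h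
  have h' := Nat.eq_of_mul_eq_mul_right k.succ_pos h
  simp [raney, h']

theorem raney_one (k : ℕ) : (raney 1 k : ℚ) = 1 / (4 * k + 1) * (5 * k).choose k := by
  rcases k with _ | k
  · simp [raney]
  have h := Nat.choose_succ_right_eq (5 * k + 5) k
  rw [show 5 * k + 5 - k = 4 * k + 5 by omega] at h
  have h' : ((5 * k + 5).choose (k + 1) : ℚ) * (k + 1) = (5 * k + 5).choose k * (4 * k + 5) := by
    exact_mod_cast h
  simp only [raney, show 5 * (k + 1) = 5 * k + 5 by ring, show 5 * k + 1 + 4 = 5 * k + 5 by ring]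
  push_cast
  field_simp
  linear_combination 4 * h'

/-- `raneySeries r = ∑ₖ raney r k X^{4k} (1 - X)^{-(5k + r)}`; the `k`-th term is `O(X^{4k})`,
so each coefficient is that of a partial sum. -/
noncomputable def raneyPartial (r N : ℕ) : ℚ⟦X⟧ :=
  ∑ k ∈ range (N + 1), (raney r k : ℚ) • (X ^ (4 * k) * PowerSeries.mk 1 ^ (5 * k + r))

noncomputable def raneySeries (r : ℕ) : ℚ⟦X⟧ :=
  PowerSeries.mk fun n => coeff n (raneyPartial r n)

theorem coeff_raneyPartial_of_le (r : ℕ) {m N N' : ℕ} (hm : m < 4 * (N + 1)) (hN : N ≤ N') :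
    coeff m (raneyPartial r N') = coeff m (raneyPartial r N) := by
  unfold raneyPartial
  rw [← sum_range_add_sum_Ico _ (by omega : N + 1 ≤ N' + 1), map_add, add_eq_left, map_sum]
  refine sum_eq_zero fun k hk => ?_
  have hk : m < 4 * k := by have := (mem_Ico.mp hk).1; omega
  rw [coeff_smul, coeff_X_pow_mul', if_neg (by omega), smul_zero]

theorem X_pow_dvd_raneySeries_sub (r N : ℕ) :
    X ^ (N + 1) ∣ raneySeries r - raneyPartial r N := by
  refine X_pow_dvd_iff.mpr fun m hm => ?_
  rw [map_sub, raneySeries, coeff_mk, coeff_raneyPartial_of_le r (by omega) (by omega : m ≤ N),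
    sub_self]

theorem one_sub_X_mul_raneyPartial (t N : ℕ) :
    (1 - X) * raneyPartial (t + 1) (N + 1) =
      raneyPartial t (N + 1) + X ^ 4 * raneyPartial (t + 5) N := by
  have h₁ : ∀ a b, (1 - X : ℚ⟦X⟧) * (X ^ a * PowerSeries.mk 1 ^ (b + (t + 1))) =
      X ^ a * PowerSeries.mk 1 ^ (b + t) := by
    intro a b
    rw [← add_assoc, pow_succ]
    linear_combination (X ^ a * PowerSeries.mk 1 ^ (b + t)) * mk_one_mul_one_sub_eq_one ℚ
  have h₂ : ∀ k, (X : ℚ⟦X⟧) ^ 4 * (X ^ (4 * k) * PowerSeries.mk 1 ^ (5 * k + (t + 5))) =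
      X ^ (4 * (k + 1)) * PowerSeries.mk 1 ^ (5 * (k + 1) + t) := by
    intro k
    ring
  simp only [raneyPartial, mul_sum, mul_smul_comm]
  rw [sum_range_succ' _ (N + 1), sum_range_succ' _ (N + 1)]
  simp only [raney_succ_succ, Int.cast_add, add_smul, sum_add_distrib, h₁, h₂]
  rw [raney_zero, raney_zero]
  abel

theorem raneySeries_recurrence (t : ℕ) :
    raneySeries (t + 1) =
      raneySeries t + X * raneySeries (t + 1) + X ^ 4 * raneySeries (t + 5) := by
  rw [← sub_eq_zero]
  refine eq_zero_of_forall_X_pow_dvd fun N => (pow_dvd_pow X N.le_succ).trans ?_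
  have e : raneySeries (t + 1) -
        (raneySeries t + X * raneySeries (t + 1) + X ^ 4 * raneySeries (t + 5)) =
      (1 - X) * (raneySeries (t + 1) - raneyPartial (t + 1) (N + 1)) -
        (raneySeries t - raneyPartial t (N + 1)) -
        X ^ 4 * (raneySeries (t + 5) - raneyPartial (t + 5) N) := by
    linear_combination (one_sub_X_mul_raneyPartial t N)
  rw [e]
  refine dvd_sub (dvd_sub ?_ ?_) ?_
  · exact ((pow_dvd_pow X (N + 1).le_succ).trans (X_pow_dvd_raneySeries_sub _ _)).mul_left _
  · exact (pow_dvd_pow X (N + 1).le_succ).trans (X_pow_dvd_raneySeries_sub _ _)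
  · exact (X_pow_dvd_raneySeries_sub _ _).mul_left _

theorem raneySeries_zero : raneySeries 0 = 1 := by
  ext n
  simp [raneySeries, raneyPartial, sum_range_succ', raney_zero_succ, coeff_one]

theorem coeff_X_pow_four_mul_mk_one_pow (n k : ℕ) :
    coeff n (X ^ (4 * k) * PowerSeries.mk 1 ^ (5 * k + 1) : ℚ⟦X⟧) =
      (n + k).choose (5 * k) := by
  rw [coeff_X_pow_mul', mk_one_pow_eq_mk_choose_add]
  split_ifs with h
  · rw [coeff_mk, show 5 * k + (n - 4 * k) = n + k by omega]
  · rw [Nat.choose_eq_zero_of_lt (by omega), Nat.cast_zero]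

theorem coeff_raneySeries_one (n : ℕ) :
    coeff n (raneySeries 1) = ∑ k ∈ range (n / 4 + 1),
      (1 / (4 * (k : ℚ) + 1)) * ((5 * k).choose k) * ((n + k).choose (5 * k)) := by
  rw [raneySeries, coeff_mk, coeff_raneyPartial_of_le 1 (N := n / 4) (by omega) (by omega),
    raneyPartial, map_sum]
  refine sum_congr rfl fun k _ => ?_
  rw [coeff_smul, coeff_X_pow_four_mul_mk_one_pow, raney_one, smul_eq_mul]

noncomputable def q : ℚ⟦X⟧ := (1 - X) * (1 + X ^ 2)

/-- `(1 - X)⁻¹ (1 + X²)⁻¹`, written so that the coefficients of its powers are explicit. -/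
noncomputable def qInv : ℚ⟦X⟧ :=
  PowerSeries.mk 1 * expand 2 two_ne_zero (rescale (-1) (PowerSeries.mk 1))

theorem q_mul_qInv : q * qInv = 1 := by
  have h : (1 + X ^ 2 : ℚ⟦X⟧) = expand 2 two_ne_zero (rescale (-1) (1 - X)) := by
    simp [sub_eq_add_neg]
  rw [q, qInv, h, mul_mul_mul_comm, ← map_mul, ← map_mul, mul_comm (1 - X),
    mk_one_mul_one_sub_eq_one, map_one, map_one, mul_one]

theorem coeff_qInv_pow_succ (n : ℕ) :
    coeff n (qInv ^ (n + 1)) =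
      ∑ j ∈ range (n / 2 + 1),
        (-1) ^ j * ((n + j).choose j : ℚ) * (2 * n - 2 * j).choose n := by
  rw [qInv, mul_pow, ← map_pow, ← map_pow, mk_one_pow_eq_mk_choose_add, coeff_mul_expand]
  refine sum_congr rfl fun j hj => ?_
  have hj : 2 * j ≤ n := by have := mem_range.mp hj; omega
  rw [coeff_rescale, coeff_mk, coeff_mk, Nat.choose_symm_add,
    show n + (n - 2 * j) = 2 * n - 2 * j by omega]

theorem derivative_q : d⁄dX ℚ q = -(1 - 2 * X + 3 * X ^ 2) := by
  simp [q]
  ring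

theorem q_mul_derivative_qInv_pow (M : ℕ) :
    q * d⁄dX ℚ (qInv ^ M) = (M : ℚ⟦X⟧) * (1 - 2 * X + 3 * X ^ 2) * qInv ^ M := by
  rw [mul_derivative_pow_of_mul_eq_one q_mul_qInv, derivative_q]
  ring

theorem coeffInt_q_mul (f : ℚ⟦X⟧) (m : ℤ) :
    coeffInt m (q * f) =
      coeffInt m f - coeffInt (m - 1) f + coeffInt (m - 2) f - coeffInt (m - 3) f := by
  have h : q * f = f - X ^ 1 * f + X ^ 2 * f - X ^ 3 * f := by rw [q]; ring
  simp only [h, map_sub, map_add, coeffInt_X_pow_mul, Nat.cast_ofNat, Nat.cast_one]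

noncomputable def qCoeff (m : ℤ) (M : ℕ) : ℚ := coeffInt m (qInv ^ M)

theorem qCoeff_pow_succ_relation (m : ℤ) (M : ℕ) :
    qCoeff m (M + 1) - qCoeff (m - 1) (M + 1) + qCoeff (m - 2) (M + 1) - qCoeff (m - 3) (M + 1) =
      qCoeff m M := by
  have h : q * qInv ^ (M + 1) = qInv ^ M := by rw [pow_succ', ← mul_assoc, q_mul_qInv, one_mul]
  unfold qCoeff
  rw [← coeffInt_q_mul, h]

theorem qCoeff_derivative_relation (m : ℤ) (M : ℕ) :
    m * qCoeff m M - (m - 1) * qCoeff (m - 1) M + (m - 2) * qCoeff (m - 2) M -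
        (m - 3) * qCoeff (m - 3) M =
      M * (qCoeff (m - 1) M - 2 * qCoeff (m - 2) M + 3 * qCoeff (m - 3) M) := by
  have h := congrArg (coeffInt (m - 1)) (q_mul_derivative_qInv_pow M)
  have e : (M : ℚ⟦X⟧) * (1 - 2 * X + 3 * X ^ 2) * qInv ^ M =
      (M : ℚ) • (qInv ^ M - (2 : ℚ) • (X ^ 1 * qInv ^ M) +
        (3 : ℚ) • (X ^ 2 * qInv ^ M)) := by
    simp only [smul_eq_C_mul, map_natCast, map_ofNat]
    ring
  rw [e, coeffInt_q_mul] at h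
  simp only [map_smul, map_sub, map_add, coeffInt_X_pow_mul, coeffInt_derivative, smul_eq_mul,
    zsmul_eq_mul, Nat.cast_one, Nat.cast_ofNat] at h
  rw [sub_add_cancel, show m - 1 - 1 + 1 = m - 1 by ring, show m - 1 - 2 + 1 = m - 2 by ring,
    show m - 1 - 3 + 1 = m - 3 by ring, show m - 1 - 1 = m - 2 by ring,
    show m - 1 - 2 = m - 3 by ring] at h
  push_cast at h
  unfold qCoeff
  linear_combination h

/-- The coefficient of `X ^ m` in `lagrangeSeries_recurrence`, with `M = m + t`, cleared of
denominators. -/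
theorem qCoeff_recurrence (m : ℤ) (M : ℕ) :
    (M + 1 - m) * M * qCoeff m (M + 1) - (M - m) * (M + 1) * qCoeff m M -
        (M + 1 - m) * (M + 1) * qCoeff (m - 1) M -
        (M + 5 - m) * M * qCoeff (m - 4) (M + 1) = 0 := by
  have hA₀ := qCoeff_pow_succ_relation m M
  have hA₁ := qCoeff_pow_succ_relation (m - 1) M
  have hC₀ := qCoeff_derivative_relation m (M + 1)
  have hC₁ := qCoeff_derivative_relation (m - 1) (M + 1)
  rw [show m - 1 - 1 = m - 2 by ring, show m - 1 - 2 = m - 3 by ring,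
    show m - 1 - 3 = m - 4 by ring] at hA₁ hC₁
  push_cast at hC₀ hC₁ ⊢
  linear_combination
    ((M : ℚ) - m) * (M + 1) * hA₀ + ((M : ℚ) + 1 - m) * (M + 1) * hA₁ + hC₀ + hC₁

noncomputable def lagrangeSeries : ℕ → ℚ⟦X⟧
  | 0 => 1
  | t + 1 => PowerSeries.mk fun n => (t + 1) / (n + t + 1) * coeff n (qInv ^ (n + t + 1))

theorem coeffInt_lagrangeSeries_succ (s : ℕ) (m : ℤ) (M : ℕ) (hM : m + s + 1 = M) :
    coeffInt m (lagrangeSeries (s + 1)) = (s + 1) / M * qCoeff m M := by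
  rcases lt_or_ge m 0 with hm | hm
  · rw [coeffInt_of_neg hm, qCoeff, coeffInt_of_neg hm, mul_zero]
  lift m to ℕ using hm
  obtain rfl : M = m + s + 1 := by omega
  simp [lagrangeSeries, qCoeff]

theorem coeffInt_lagrangeSeries (t : ℕ) (n : ℕ) (hnt : n + t ≠ 0) :
    coeffInt n (lagrangeSeries t) = t / (n + t) * qCoeff n (n + t) := by
  rcases t with _ | s
  · simp_all [lagrangeSeries, coeff_one]
  · rw [coeffInt_lagrangeSeries_succ s n (n + (s + 1)) (by push_cast; ring)]
    push_cast
    ring_nf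

theorem lagrangeSeries_recurrence (t : ℕ) :
    lagrangeSeries (t + 1) =
      lagrangeSeries t + X * lagrangeSeries (t + 1) + X ^ 4 * lagrangeSeries (t + 5) := by
  ext n
  rcases eq_or_ne (n + t) 0 with hnt | hnt
  · obtain ⟨rfl, rfl⟩ : n = 0 ∧ t = 0 := by omega
    have h : constantCoeff (rescale (-1 : ℚ) (PowerSeries.mk 1)) = 1 := by
      rw [← coeff_zero_eq_constantCoeff_apply, coeff_rescale]
      simp
    simp [lagrangeSeries, qInv, h]
  simp only [← coeffInt_natCast, map_add, coeffInt_X_mul, coeffInt_X_pow_mul, Nat.cast_ofNat]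
  have hd₀ : (n + t : ℚ) ≠ 0 := by exact_mod_cast hnt
  have hd₁ : (n + t + 1 : ℚ) ≠ 0 := by positivity
  rw [coeffInt_lagrangeSeries_succ t n (n + t + 1) (by push_cast; ring),
    coeffInt_lagrangeSeries_succ t (n - 1) (n + t) (by push_cast; ring),
    coeffInt_lagrangeSeries_succ (t + 4) (n - 4) (n + t + 1) (by push_cast; ring),
    coeffInt_lagrangeSeries t n hnt]
  have hT := qCoeff_recurrence n (n + t)
  push_cast at hT ⊢
  field_simp
  linear_combination hT

theorem coeff_lagrangeSeries_one (n : ℕ) :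
    coeff n (lagrangeSeries 1) = ∑ k ∈ range (n / 2 + 1),
      ((-1) ^ k / ((n : ℚ) + 1)) * ((n + k).choose k) * ((2 * n - 2 * k).choose n) := by
  simp only [lagrangeSeries, coeff_mk, Nat.cast_zero, add_zero, coeff_qInv_pow_succ, mul_sum]
  refine sum_congr rfl fun k _ => ?_
  ring

end SunIdentity

open SunIdentity

theorem sun_identity_4 (n : ℕ) :
    ∑ k ∈ range (n / 4 + 1),
      (1 / (4 * (k : ℚ) + 1)) * ((5 * k).choose k) * ((n + k).choose (5 * k)) =
    ∑ k ∈ range (n / 2 + 1),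
      ((-1) ^ k / ((n : ℚ) + 1)) * ((n + k).choose k) * ((2 * n - 2 * k).choose n) := by
  have h : raneySeries = lagrangeSeries :=
    family_eq_of_recurrence 3 5 raneySeries_zero raneySeries_recurrence lagrangeSeries_recurrence
  rw [← coeff_raneySeries_one, ← coeff_lagrangeSeries_one, h]
end

section
/- For all nonnegative integers m and n, the sum over k from 0 to floor(n/2) of C(m+k, k) * C(m+1, n-2k) equals C(m+n, n). -/
open Finset

private def sunS (m n : ℕ) : ℕ :=
  ∑ k ∈ range (n / 2 + 1), (m + k).choose k * (m + 1).choose (n - 2 * k)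

private def sunU (m n k : ℕ) : ℤ :=
  if 1 ≤ k ∧ 2 * k ≤ n + 1 then ((m + k).choose (k - 1) * (m + 1).choose (n + 1 - 2 * k) : ℕ)
  else 0

private lemma sunS_cast (m n N : ℕ) (h : n / 2 + 1 ≤ N) :
    (sunS m n : ℤ) =
      ∑ k ∈ range N, (if 2 * k ≤ n then ((m + k).choose k * (m + 1).choose (n - 2 * k) : ℤ) else 0) := by
  rw [sunS]
  push_cast
  rw [← Finset.sum_subset (Finset.range_subset_range.2 h)]
  · apply Finset.sum_congr rfl
    intro k hk
    rw [Finset.mem_range] at hk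
    rw [if_pos (by omega)]
  · intro k _ hk
    rw [Finset.mem_range] at hk
    rw [if_neg (by omega)]

private lemma sun_term (m n k : ℕ) :
    (if 2 * k ≤ n + 1 then ((m + 1 + k).choose k * (m + 2).choose (n + 1 - 2 * k) : ℤ) else 0)
  = (if 2 * k ≤ n then ((m + 1 + k).choose k * (m + 2).choose (n - 2 * k) : ℤ) else 0)
  + (if 2 * k ≤ n + 1 then ((m + k).choose k * (m + 1).choose (n + 1 - 2 * k) : ℤ) else 0)
  + (sunU m n k - sunU m n (k + 1)) := by
  rcases k with _ | k
  · -- k = 0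
    rw [if_pos (by omega), if_pos (by omega), if_pos (by omega)]
    rw [sunU, sunU, if_neg (by omega)]
    simp only [Nat.mul_zero, Nat.sub_zero, Nat.add_zero, Nat.choose_zero_right, Nat.choose_self]
    rcases n with _ | n
    · rw [if_neg (by omega)]
      simp [Nat.choose_one_right, Nat.choose_self]
      ring
    · rw [if_pos (by omega)]
      have e1 : n + 1 + 1 - 2 * 1 = n := by omega
      rw [e1]
      simp only [show (1:ℕ) - 1 = 0 from rfl, Nat.choose_zero_right]
      have h1 : ((m + 2).choose (n + 2) : ℤ) = (m + 1).choose (n + 1) + (m + 1).choose (n + 2) := by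
        exact_mod_cast Nat.choose_succ_succ (m + 1) (n + 1)
      have h2 : ((m + 2).choose (n + 1) : ℤ) = (m + 1).choose n + (m + 1).choose (n + 1) := by
        exact_mod_cast Nat.choose_succ_succ (m + 1) n
      push_cast
      linear_combination h1 - h2
  · -- k = k + 1
    have hpasc : ((m + 1 + (k + 1)).choose (k + 1) : ℤ)
        = (m + (k + 1)).choose (k + 1) + (m + (k + 1)).choose k := by
      have := Nat.choose_succ_succ (m + k + 1) k
      have e : m + 1 + (k + 1) = m + k + 1 + 1 := by omega
      have e2 : m + (k + 1) = m + k + 1 := by omega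
      rw [e, e2]
      push_cast [this]
      ring
    rcases lt_or_ge (n + 1) (2 * (k + 1)) with h | h
    · -- 2(k+1) ≥ n+2 : everything zero
      rw [if_neg (by omega), if_neg (by omega), if_neg (by omega)]
      rw [sunU, sunU, if_neg (by omega), if_neg (by omega)]
      ring
    · rcases eq_or_lt_of_le h with h1 | h1
      · -- 2(k+1) = n+1
        rw [if_pos (by omega), if_neg (by omega), if_pos (by omega)]
        rw [sunU, sunU, if_pos (by omega), if_neg (by omega)]
        have e1 : n + 1 - 2 * (k + 1) = 0 := by omega
        have e2 : k + 1 - 1 = k := rfl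
        rw [e1, e2]
        simp only [Nat.choose_zero_right]
        push_cast
        linear_combination hpasc
      · rcases eq_or_lt_of_le (Nat.succ_le_of_lt h1) with h2 | h2
        · -- 2(k+1) = n
          rw [if_pos (by omega), if_pos (by omega), if_pos (by omega)]
          rw [sunU, sunU, if_pos (by omega), if_neg (by omega)]
          have e1 : n + 1 - 2 * (k + 1) = 1 := by omega
          have e2 : n - 2 * (k + 1) = 0 := by omega
          have e3 : k + 1 - 1 = k := rfl
          rw [e1, e2, e3]
          simp only [Nat.choose_zero_right, Nat.choose_one_right]
          push_cast
          linear_combination ((m : ℤ) + 1) * hpasc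
        · -- 2(k+1) + 1 ≤ n
          obtain ⟨j, hj⟩ : ∃ j, n = 2 * (k + 1) + j + 1 := ⟨n - 2 * (k + 1) - 1, by omega⟩
          rw [if_pos (by omega), if_pos (by omega), if_pos (by omega)]
          rw [sunU, sunU, if_pos (by omega), if_pos (by omega)]
          have e1 : n + 1 - 2 * (k + 1) = j + 2 := by omega
          have e2 : n - 2 * (k + 1) = j + 1 := by omega
          have e3 : k + 1 - 1 = k := rfl
          have e4 : k + 1 + 1 - 1 = k + 1 := rfl
          have e5 : n + 1 - 2 * (k + 1 + 1) = j := by omega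
          rw [e1, e2, e3, e4, e5]
          have h1 : ((m + 2).choose (j + 2) : ℤ) = (m + 1).choose (j + 1) + (m + 1).choose (j + 2) := by
            exact_mod_cast Nat.choose_succ_succ (m + 1) (j + 1)
          have h2 : ((m + 2).choose (j + 1) : ℤ) = (m + 1).choose j + (m + 1).choose (j + 1) := by
            exact_mod_cast Nat.choose_succ_succ (m + 1) j
          have e6 : m + (k + 1 + 1) = m + 1 + (k + 1) := by omega
          rw [e6]
          push_cast
          linear_combination ((m + 1 + (k + 1)).choose (k + 1) : ℤ) * (h1 - h2)
            + ((m + 1).choose (j + 2) : ℤ) * hpasc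

private lemma sun_rec (m n : ℕ) :
    sunS (m + 1) (n + 1) = sunS (m + 1) n + sunS m (n + 1) := by
  have key : (sunS (m + 1) (n + 1) : ℤ) = (sunS (m + 1) n : ℤ) + (sunS m (n + 1) : ℤ) := by
    rw [sunS_cast (m + 1) (n + 1) (n + 2) (by omega),
        sunS_cast (m + 1) n (n + 2) (by omega),
        sunS_cast m (n + 1) (n + 2) (by omega)]
    rw [← Finset.sum_add_distrib]
    have tele : ∑ k ∈ range (n + 2), (sunU m n k - sunU m n (k + 1)) = 0 := by
      rw [Finset.sum_range_sub' (fun k => sunU m n k) (n + 2)]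
      rw [sunU, sunU, if_neg (by omega), if_neg (by omega)]
      ring
    calc ∑ k ∈ range (n + 2),
          (if 2 * k ≤ n + 1 then ((m + 1 + k).choose k * (m + 2).choose (n + 1 - 2 * k) : ℤ) else 0)
        = ∑ k ∈ range (n + 2),
            ((if 2 * k ≤ n then ((m + 1 + k).choose k * (m + 2).choose (n - 2 * k) : ℤ) else 0)
            + (if 2 * k ≤ n + 1 then ((m + k).choose k * (m + 1).choose (n + 1 - 2 * k) : ℤ) else 0)
            + (sunU m n k - sunU m n (k + 1))) := by
          apply Finset.sum_congr rfl
          intro k _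
          exact sun_term m n k
      _ = _ := by
          rw [Finset.sum_add_distrib, tele, add_zero]
  exact_mod_cast key

private lemma sunS_zero (n : ℕ) : sunS 0 n = 1 := by
  rw [sunS]
  rw [Finset.sum_eq_single_of_mem (n / 2) (by rw [Finset.mem_range]; omega)]
  · simp only [Nat.zero_add, Nat.choose_self, one_mul]
    have : n - 2 * (n / 2) = 0 ∨ n - 2 * (n / 2) = 1 := by omega
    rcases this with h | h <;> rw [h] <;> simp
  · intro k hk hne
    rw [Finset.mem_range] at hk
    have : 1 < n - 2 * k := by omega
    rw [Nat.choose_eq_zero_of_lt this, mul_zero]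

private lemma sun_key : ∀ m n, sunS m n = (m + n).choose n := by
  intro m
  induction m with
  | zero =>
    intro n
    rw [sunS_zero, Nat.zero_add, Nat.choose_self]
  | succ m ih =>
    intro n
    induction n with
    | zero => simp [sunS]
    | succ n ihn =>
      rw [sun_rec, ihn, ih (n + 1)]
      have e1 : m + 1 + (n + 1) = (m + 1 + n) + 1 := by omega
      have e2 : m + (n + 1) = m + 1 + n := by omega
      rw [e1, e2, Nat.choose_succ_succ]

theorem sun_identity_new1 (m n : ℕ) :
    ∑ k ∈ range (n / 2 + 1), (m + k).choose k * (m + 1).choose (n - 2 * k) =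
    (m + n).choose n := by
  have := sun_key m n
  rw [sunS] at this
  exact this
end

section
/- For all nonnegative integers m and n, the sum over k from 0 to floor(n/4) of C(m+k, k) * C(m+1, n-4k) equals the sum over k from 0 to floor(n/2) of (-1)^k * C(m+k, k) * C(m+n-2k, m). -/
/-!
With `S = ∑ C(m+k, k) Xᵏ = (1 - X)^-(m+1)`, the left side is the coefficient of `Xⁿ` in
`S(X⁴) (1 + X)^(m+1)` and the right side that in `S(-X²) S(X)`. Since
`1 - X⁴ = (1 - X)(1 + X)(1 + X²)`, both series are the inverse of `((1 - X)(1 + X²))^(m+1)`.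
-/

open Finset PowerSeries

theorem Finset.sum_filter_dvd_range {M : Type*} [AddCommMonoid M] {p : ℕ} (hp : p ≠ 0) (n : ℕ)
    (f : ℕ → M) :
    ∑ j ∈ (range (n + 1)).filter (p ∣ ·), f j = ∑ k ∈ range (n / p + 1), f (p * k) := by
  refine (sum_nbij' (p * ·) (· / p) ?_ ?_ ?_ ?_ fun _ _ => rfl).symm
  all_goals intro k hk; simp only [mem_filter, mem_range, Order.lt_add_one_iff] at hk ⊢
  · exact ⟨(Nat.mul_comm p k).trans_le (Nat.mul_le_of_le_div p k n hk), dvd_mul_right p k⟩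
  · exact Nat.div_le_div_right hk.1
  · exact Nat.mul_div_cancel_left k (Nat.pos_of_ne_zero hp)
  · exact Nat.mul_div_cancel' hk.2

namespace PowerSeries

variable {R : Type*}

theorem coeff_one_add_X_pow [CommSemiring R] (N n : ℕ) :
    coeff n ((1 + X : R⟦X⟧) ^ N) = N.choose n := by
  have : (1 + X : R⟦X⟧) ^ N = (((1 + Polynomial.X) ^ N : Polynomial R) : R⟦X⟧) := by simp
  rw [this, Polynomial.coeff_coe, Polynomial.coeff_one_add_X_pow]

variable [CommRing R]

theorem coeff_expand_mul_eq_sum {p : ℕ} (hp : p ≠ 0) (f g : R⟦X⟧) (n : ℕ) :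
    coeff n (expand p hp f * g) = ∑ k ∈ range (n / p + 1), coeff k f * coeff (n - p * k) g := by
  rw [coeff_mul, Nat.sum_antidiagonal_eq_sum_range_succ_mk]
  simp only [coeff_expand, ite_mul, zero_mul]
  rw [← sum_filter, sum_filter_dvd_range hp]
  simp only [Nat.mul_div_cancel_left _ (Nat.pos_of_ne_zero hp)]

section

variable {S : R⟦X⟧} {d : ℕ} (hS : S * (1 - X) ^ d = 1)
include hS

theorem expand_mul_one_sub_X_pow_pow {p : ℕ} (hp : p ≠ 0) :
    expand p hp S * (1 - X ^ p) ^ d = 1 := by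
  rw [← expand_X p hp, ← map_one (expand p hp), ← map_sub, ← map_pow, ← map_mul, hS, map_one]

theorem expand_rescale_neg_one_mul_one_add_X_pow_pow {p : ℕ} (hp : p ≠ 0) :
    expand p hp (rescale (-1) S) * (1 + X ^ p) ^ d = 1 := by
  simpa only [map_mul, map_pow, map_sub, map_add, map_one, rescale_neg_one_X, sub_neg_eq_add,
    expand_X] using congrArg (fun f ↦ expand p hp (rescale (-1) f)) hS

theorem expand_four_mul_one_add_X_pow :
    expand 4 four_ne_zero S * (1 + X) ^ d = expand 2 two_ne_zero (rescale (-1) S) * S := by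
  refine left_inv_eq_right_inv (a := ((1 - X) * (1 + X ^ 2)) ^ d) ?_ ?_
  · calc expand 4 four_ne_zero S * (1 + X) ^ d * ((1 - X) * (1 + X ^ 2)) ^ d
        = expand 4 four_ne_zero S * (1 - X ^ 4) ^ d := by rw [mul_assoc, ← mul_pow]; ring
      _ = 1 := expand_mul_one_sub_X_pow_pow hS _
  · calc ((1 - X) * (1 + X ^ 2)) ^ d * (expand 2 two_ne_zero (rescale (-1) S) * S)
        = (expand 2 two_ne_zero (rescale (-1) S) * (1 + X ^ 2) ^ d) * (S * (1 - X) ^ d) := by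
          rw [mul_pow]; ring
      _ = 1 := by rw [expand_rescale_neg_one_mul_one_add_X_pow_pow hS, hS, one_mul]

end

end PowerSeries

theorem sun_identity_new2 (m n : ℕ) :
    ∑ k ∈ range (n / 4 + 1),
      ((m + k).choose k * (m + 1).choose (n - 4 * k) : ℤ) =
    ∑ k ∈ range (n / 2 + 1),
      (-1 : ℤ) ^ k * (m + k).choose k * (m + n - 2 * k).choose m := by
  have hS : (mk fun k ↦ ((m + k).choose k : ℤ)) * (1 - X) ^ (m + 1) = 1 := by
    convert mk_add_choose_mul_one_sub_pow_eq_one ℤ m using 4 with k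
    rw [Nat.choose_symm_add]
  have key := congrArg (coeff n) (expand_four_mul_one_add_X_pow hS)
  simp only [coeff_expand_mul_eq_sum, coeff_mk, coeff_rescale, coeff_one_add_X_pow] at key
  refine key.trans (sum_congr rfl fun k hk ↦ ?_)
  rw [mem_range, Nat.lt_succ_iff, Nat.le_div_iff_mul_le two_pos] at hk
  rw [Nat.add_sub_assoc (by omega), Nat.choose_symm_add]
end

section
/- For all nonnegative integers m and n, the set of partitions with largest part at most m+1 and exactly n parts is in weight-preserving bijection with the set of pairs (λ, μ) where λ is a partition and μ is a partition into distinct parts, both with largest part at most m+1, satisfying 2·(number of parts of λ) + (number of parts of μ) = n; here a partition of weight w corresponds to a pair with 2|λ| + |μ| = w. -/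
namespace PPB

def half (s : Multiset ℕ) : Multiset ℕ :=
  s.dedup.bind (fun a => Multiset.replicate (s.count a / 2) a)

def odds (s : Multiset ℕ) : Multiset ℕ :=
  s.dedup.filter (fun a => s.count a % 2 = 1)

lemma count_half (s : Multiset ℕ) (b : ℕ) : (half s).count b = s.count b / 2 := by
  rw [half, Multiset.count_bind]
  have : (s.dedup.map fun a => (Multiset.replicate (s.count a / 2) a).count b).sum
      = ∑ a ∈ s.toFinset, (Multiset.replicate (s.count a / 2) a).count b := rfl
  rw [this]
  simp only [Multiset.count_replicate]
  rw [Finset.sum_ite_eq']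
  by_cases hb : b ∈ s
  · simp [hb]
  · simp [hb, Multiset.count_eq_zero_of_notMem hb]

lemma count_odds (s : Multiset ℕ) (b : ℕ) : (odds s).count b = s.count b % 2 := by
  rw [odds, Multiset.count_filter]
  by_cases h : s.count b % 2 = 1
  · have hb : b ∈ s := by
      rw [← Multiset.count_pos]; omega
    simp [h, Multiset.count_dedup, hb]
  · simp [h]; omega

lemma nodup_odds (s : Multiset ℕ) : (odds s).Nodup :=
  (Multiset.nodup_dedup s).filter _

lemma glue_eq (s : Multiset ℕ) : half s + half s + odds s = s := by
  ext b
  simp [Multiset.count_add, count_half, count_odds]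
  omega

lemma half_glue (lam mu : Multiset ℕ) (h : mu.Nodup) :
    half (lam + lam + mu) = lam := by
  ext b
  rw [count_half]
  simp only [Multiset.count_add]
  have : mu.count b ≤ 1 := Multiset.nodup_iff_count_le_one.1 h b
  omega

lemma odds_glue (lam mu : Multiset ℕ) (h : mu.Nodup) :
    odds (lam + lam + mu) = mu := by
  ext b
  rw [count_odds]
  simp only [Multiset.count_add]
  have : mu.count b ≤ 1 := Multiset.nodup_iff_count_le_one.1 h b
  omega

lemma mem_half {s : Multiset ℕ} {x : ℕ} (hx : x ∈ half s) : x ∈ s := by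
  rw [← Multiset.count_pos] at hx ⊢
  rw [count_half] at hx
  omega

lemma mem_odds {s : Multiset ℕ} {x : ℕ} (hx : x ∈ odds s) : x ∈ s := by
  rw [← Multiset.count_pos] at hx ⊢
  rw [count_odds] at hx
  omega

end PPB

/-- A partition with parts bounded by `m+1` is modeled as a multiset of parts,
each in `[1, m+1]`; its length is the card and its weight the sum.
There is a weight-preserving bijection between partitions with exactly `n` parts,
all at most `m+1`, and pairs `(λ, μ)` with `λ` a partition, `μ` a partition into
distinct parts, both with parts at most `m+1`, and `2ℓ(λ) + ℓ(μ) = n`, where the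
weight of the pair is `2|λ| + |μ|`. -/
theorem partition_pair_bijection (m n : ℕ) :
    ∃ e : {s : Multiset ℕ // s.card = n ∧ ∀ x ∈ s, 1 ≤ x ∧ x ≤ m + 1} ≃
          {p : Multiset ℕ × Multiset ℕ //
            2 * p.1.card + p.2.card = n ∧
            (∀ x ∈ p.1, 1 ≤ x ∧ x ≤ m + 1) ∧
            (∀ x ∈ p.2, 1 ≤ x ∧ x ≤ m + 1) ∧ p.2.Nodup},
      ∀ s, (s : {s : Multiset ℕ // s.card = n ∧ ∀ x ∈ s, 1 ≤ x ∧ x ≤ m + 1}).1.sum =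
            2 * (e s).1.1.sum + (e s).1.2.sum := by
  refine ⟨{
    toFun := fun ⟨s, hcard, hbd⟩ => ⟨(PPB.half s, PPB.odds s), ?_, ?_, ?_, PPB.nodup_odds s⟩
    invFun := fun ⟨(lam, mu), hc, h1, h2, hnd⟩ => ⟨lam + lam + mu, ?_, ?_⟩
    left_inv := ?_
    right_inv := ?_ }, ?_⟩
  · have := congrArg Multiset.card (PPB.glue_eq s)
    simp only [Multiset.card_add] at this
    dsimp only
    omega
  · exact fun x hx => hbd x (PPB.mem_half hx)
  · exact fun x hx => hbd x (PPB.mem_odds hx)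
  · dsimp only at *; simp only [Multiset.card_add]; omega
  · intro x hx
    simp only [Multiset.mem_add] at hx
    rcases hx with (h | h) | h
    exacts [h1 x h, h1 x h, h2 x h]
  · rintro ⟨s, hcard, hbd⟩
    simp only [Subtype.mk.injEq]
    exact PPB.glue_eq s
  · rintro ⟨⟨lam, mu⟩, hc, h1, h2, hnd⟩
    simp only [Subtype.mk.injEq, Prod.mk.injEq]
    exact ⟨PPB.half_glue lam mu hnd, PPB.odds_glue lam mu hnd⟩
  · rintro ⟨s, hcard, hbd⟩
    simp only [Equiv.coe_fn_mk]
    have := congrArg Multiset.sum (PPB.glue_eq s)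
    simp only [Multiset.sum_add] at this
    omega
end

section
/- For all nonnegative integers m and n, q^n times the sum over k from 0 to floor(n/2) of (-1)^k [m+k choose k]_{q^2} [m+n-2k choose n-2k]_q equals the sum over pairs (λ, μ) of partitions with largest parts at most m+1 and 2ℓ(λ)+ℓ(μ)=n of (-1)^{ℓ(λ)} q^{2|λ|+|μ|}. -/
/-!
The generating function `G(m, k) = ∑ q^|λ|` of the partitions with at most `k` parts, all `≤ m`,
satisfies the q-Pascal recursion `G(m+1, k+1) = G(m, k+1) + q^(m+1) G(m+1, k)` (according as the
largest part is `< m+1` or `= m+1`), which gives `G(m, k) (q; q)_k = (q^(m+1); q)_k`; so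
`G(m, k) = [m+k choose k]_q` when `q` is not a root of unity. In the `k`-th summand the product
`G_{q²}(m, k) G_q(m, n-2k)` is then a sum over pairs `(λ, μ)` with `ℓ(λ) ≤ k`, `ℓ(μ) ≤ n-2k`, and
the factor `qⁿ = (q²)ᵏ q^(n-2k)` raises every part by one, making the lengths exactly `k`, `n-2k`.
-/

open Finset

/-- The Gaussian (q-)binomial coefficient `[a choose b]_q`, defined as
`∏_{i=1}^{b} (1 - q^(a-i+1)) / (1 - q^i)` (which is `0` when `b > a`). -/
noncomputable def qbinom (q : RatFunc ℚ) (a b : ℕ) : RatFunc ℚ :=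
  ∏ i ∈ Finset.range b, (1 - q ^ ((a : ℤ) - i)) / (1 - q ^ ((i : ℤ) + 1))

lemma Fin.antitone_cons_iff {α : Type*} [Preorder α] {n : ℕ} {f : Fin n → α} {a : α} :
    Antitone (Fin.cons a f : Fin (n + 1) → α) ↔ (∀ i, f i ≤ a) ∧ Antitone f := by
  simp only [antitone_iff_forall_lt]
  exact Fin.liftFun_cons (· ≥ ·)

lemma RatFunc.not_isOfFinOrder_X {K : Type*} [Field K] : ¬ IsOfFinOrder (X : RatFunc K) := by
  rw [isOfFinOrder_iff_pow_eq_one]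
  rintro ⟨n, hn, hXn⟩
  have hpoly : (Polynomial.X : Polynomial K) ^ n = 1 := by
    apply RatFunc.algebraMap_injective K
    rw [map_pow, RatFunc.algebraMap_X, hXn, map_one]
  simpa [hn.ne'] using congrArg Polynomial.natDegree hpoly

section GeneratingFunction

variable {R : Type*} [CommRing R]

def qPochhammer (a q : R) (k : ℕ) : R :=
  ∏ i ∈ range k, (1 - a * q ^ i)

@[simp]
lemma qPochhammer_zero (a q : R) : qPochhammer a q 0 = 1 := prod_range_zero _

lemma qPochhammer_succ (a q : R) (k : ℕ) :
    qPochhammer a q (k + 1) = qPochhammer a q k * (1 - a * q ^ k) :=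
  prod_range_succ _ k

lemma qPochhammer_succ' (a q : R) (k : ℕ) :
    qPochhammer a q (k + 1) = (1 - a) * qPochhammer (a * q) q k := by
  simp only [qPochhammer, prod_range_succ', pow_succ, mul_assoc, pow_zero, mul_one, mul_comm]

/-- `∑ q^|λ|` over the partitions `λ` with at most `k` parts, all `≤ m`
(the nonzero values of `f`). -/
def antitoneTupleGF (q : R) (m k : ℕ) : R :=
  ∑ f ∈ {f : Fin k → Fin (m + 1) | Antitone f}, q ^ ∑ i, (f i : ℕ)

@[simp]
lemma antitoneTupleGF_zero_left (q : R) (k : ℕ) : antitoneTupleGF q 0 k = 1 := by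
  simp [antitoneTupleGF, Subsingleton.antitone']

@[simp]
lemma antitoneTupleGF_zero_right (q : R) (m : ℕ) : antitoneTupleGF q m 0 = 1 := by
  simp [antitoneTupleGF, Subsingleton.antitone]

lemma sum_antitone_filter_head_ne_last (q : R) (m k : ℕ) :
    ∑ f ∈ {f : Fin (k + 1) → Fin (m + 2) | Antitone f} with f 0 ≠ Fin.last (m + 1),
      q ^ ∑ i, (f i : ℕ) = antitoneTupleGF q m (k + 1) := by
  symm
  apply sum_nbij (fun g => Fin.castSucc ∘ g)
  · intro g hg
    simp only [mem_filter, mem_univ, true_and, Function.comp_apply] at hg ⊢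
    exact ⟨Fin.strictMono_castSucc.monotone.comp_antitone hg, Fin.castSucc_ne_last _⟩
  · exact (Function.Injective.comp_left (Fin.castSucc_injective _)).injOn
  · intro f hf
    simp only [coe_filter, mem_filter, mem_univ, true_and, Set.mem_ofPred_eq] at hf
    obtain ⟨hanti, hf0⟩ := hf
    have hne : ∀ i, f i ≠ Fin.last (m + 1) := fun i =>
      ((hanti (Fin.zero_le i)).trans_lt (Fin.lt_last_iff_ne_last.2 hf0)).ne
    refine ⟨fun i => (f i).castPred (hne i), ?_, funext fun i => Fin.castSucc_castPred _ _⟩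
    simp only [coe_filter, mem_univ, true_and, Set.mem_ofPred_eq]
    exact fun i j hij => Fin.castPred_le_castPred_iff.2 (hanti hij)
  · intro g _
    simp

lemma sum_antitone_filter_head_eq_last (q : R) (m k : ℕ) :
    ∑ f ∈ {f : Fin (k + 1) → Fin (m + 2) | Antitone f} with f 0 = Fin.last (m + 1),
      q ^ ∑ i, (f i : ℕ) = q ^ (m + 1) * antitoneTupleGF q (m + 1) k := by
  rw [antitoneTupleGF, mul_sum]
  symm
  apply sum_nbij (Fin.cons (α := fun _ => Fin (m + 2)) (Fin.last (m + 1)))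
  · intro g hg
    simp_all [Fin.antitone_cons_iff, Fin.le_last]
  · exact (Fin.cons_right_injective _).injOn
  · intro f hf
    simp only [coe_filter, mem_filter, mem_univ, true_and, Set.mem_ofPred_eq] at hf
    refine ⟨Fin.tail f, ?_, ?_⟩
    · simp only [coe_filter, mem_univ, true_and, Set.mem_ofPred_eq]
      exact hf.1.comp_monotone Fin.strictMono_succ.monotone
    · simp [← hf.2]
  · intro g _
    simp [Fin.sum_univ_succ, pow_add]

lemma antitoneTupleGF_succ_succ (q : R) (m k : ℕ) :
    antitoneTupleGF q (m + 1) (k + 1) =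
      antitoneTupleGF q m (k + 1) + q ^ (m + 1) * antitoneTupleGF q (m + 1) k := by
  rw [antitoneTupleGF, ← sum_filter_not_add_sum_filter _ (fun f => f 0 = Fin.last (m + 1)),
    sum_antitone_filter_head_ne_last, sum_antitone_filter_head_eq_last]

theorem antitoneTupleGF_mul_qPochhammer (q : R) (m k : ℕ) :
    antitoneTupleGF q m k * qPochhammer q q k = qPochhammer (q ^ (m + 1)) q k := by
  induction k generalizing m with
  | zero => simp
  | succ k ihk =>
    induction m with
    | zero => simp
    | succ m ihm =>
      rw [antitoneTupleGF_succ_succ, add_mul, ihm, qPochhammer_succ' (q ^ (m + 1)),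
        qPochhammer_succ q q k, qPochhammer_succ (q ^ (m + 1 + 1)), ← pow_succ]
      linear_combination (q ^ (m + 1) * (1 - q * q ^ k)) * ihk (m + 1)

end GeneratingFunction

theorem qbinom_add_left_eq_antitoneTupleGF {q : RatFunc ℚ} (hq : ¬ IsOfFinOrder q) (m k : ℕ) :
    qbinom q (m + k) k = antitoneTupleGF q m k := by
  have hden : qPochhammer q q k ≠ 0 := prod_ne_zero_iff.2 fun i _ h => hq <|
    isOfFinOrder_iff_pow_eq_one.2
      ⟨i + 1, i.succ_pos, by rw [pow_succ']; exact (sub_eq_zero.1 h).symm⟩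
  rw [eq_comm, ← mul_div_cancel_right₀ (antitoneTupleGF q m k) hden,
    antitoneTupleGF_mul_qPochhammer, qbinom, prod_div_distrib, qPochhammer, qPochhammer,
    ← prod_range_reflect]
  congr 1 <;> refine prod_congr rfl fun i hi => ?_
  · rw [mem_range] at hi
    rw [← pow_add, ← zpow_natCast]
    congr 3
    omega
  · rw [← pow_succ', ← zpow_natCast]
    push_cast
    rfl

/-- Partitions with `k` parts, each part in `[1, m+1]`, are encoded as antitone functions
`Fin k → Fin (m+1)` (part `i` being `f i + 1`). -/
theorem q_sum_eq_signed_partition_pairs (m n : ℕ) :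
    RatFunc.X ^ n *
      ∑ k ∈ range (n / 2 + 1),
        (-1) ^ k * qbinom (RatFunc.X ^ 2) (m + k) k *
          qbinom RatFunc.X (m + n - 2 * k) (n - 2 * k) =
    ∑ k ∈ range (n / 2 + 1),
      ∑ f ∈ {f : Fin k → Fin (m + 1) | ∀ i j : Fin k, i ≤ j → f j ≤ f i},
        ∑ g ∈ {g : Fin (n - 2 * k) → Fin (m + 1) |
                ∀ i j : Fin (n - 2 * k), i ≤ j → g j ≤ g i},
          ((-1 : RatFunc ℚ) ^ k *
            RatFunc.X ^ (2 * (∑ i, ((f i : ℕ) + 1)) + ∑ i, ((g i : ℕ) + 1))) := by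
  have hX : ¬ IsOfFinOrder (RatFunc.X : RatFunc ℚ) := RatFunc.not_isOfFinOrder_X
  have hX2 : ¬ IsOfFinOrder (RatFunc.X ^ 2 : RatFunc ℚ) := fun h => hX (h.of_pow two_ne_zero)
  rw [mul_sum]
  refine sum_congr rfl fun k hk => ?_
  obtain ⟨r, rfl⟩ : ∃ r, n = 2 * k + r := ⟨n - 2 * k, by rw [mem_range] at hk; omega⟩
  rw [Nat.add_sub_cancel_left, show m + (2 * k + r) - 2 * k = m + r by omega,
    qbinom_add_left_eq_antitoneTupleGF hX2, qbinom_add_left_eq_antitoneTupleGF hX,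
    antitoneTupleGF, antitoneTupleGF, mul_assoc, sum_mul_sum, mul_sum, mul_sum]
  refine sum_congr rfl fun f _ => ?_
  rw [mul_sum, mul_sum]
  refine sum_congr rfl fun g _ => ?_
  simp only [sum_add_distrib, sum_const, card_univ, Fintype.card_fin, smul_eq_mul, mul_one]
  ring
end
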